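/- Let j be odd, x ⊆ ⟦n⟧_{j+1}, x̄, x̂ ⊆ ⟦n⟧_{j+2}. Suppose x, x̄, x̂ are each well-formed, x̄⁻ ∩ x = ∅, and x̂⁺ ∩ x = ∅. Then x̄⊖ ∪ x⊙ ∪ x̂⊕ ⊆ ⟦n+1⟧_{j+2} is well-formed. In particular, elements of x̄⊖ and x̂⊕ share no face at all, since any common face would end simultaneously in ⊖ and ⊕. -/

import Mathlib

/-- The three symbols `⊖`, `⊙`, `⊕`. -/
inductive CSym : Type
  | minus : CSym
  | mid : CSym
  | plus : CSym
deriving DecidableEq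

/-- `Str n j` is `⟦n⟧_j`: strings of length `n` over `{⊖,⊙,⊕}` with exactly `j`
occurrences of `⊙`. -/
def Str (n j : ℕ) : Type := {l : List CSym // l.length = n ∧ l.count CSym.mid = j}

/-- The even faces `a⁺` of `a ∈ ⟦n⟧_{j+1}`: replace the `i`-th occurrence of `⊙`
by `⊕` if `i` is odd (i.e. the number of earlier `⊙`'s is even), and by `⊖` if
`i` is even. -/
def posF {n j : ℕ} (a : Str n (j+1)) : Set (Str n j) :=
  {b | ∃ (q : ℕ) (h : q < a.1.length), a.1.get ⟨q, h⟩ = CSym.mid ∧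
    b.1 = a.1.set q (if Even ((a.1.take q).count CSym.mid) then CSym.plus else CSym.minus)}

/-- The odd faces `a⁻` of `a ∈ ⟦n⟧_{j+1}`: replace the `i`-th occurrence of `⊙`
by `⊖` if `i` is odd, and by `⊕` if `i` is even. -/
def negF {n j : ℕ} (a : Str n (j+1)) : Set (Str n j) :=
  {b | ∃ (q : ℕ) (h : q < a.1.length), a.1.get ⟨q, h⟩ = CSym.mid ∧
    b.1 = a.1.set q (if Even ((a.1.take q).count CSym.mid) then CSym.minus else CSym.plus)}

def sPos {n j : ℕ} (ξ : Set (Str n (j+1))) : Set (Str n j) := ⋃ a ∈ ξ, posF a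
def sNeg {n j : ℕ} (ξ : Set (Str n (j+1))) : Set (Str n j) := ⋃ a ∈ ξ, negF a

/-- Append `⊖` to a string. -/
def appM {n j : ℕ} (a : Str n j) : Str (n+1) j :=
  ⟨a.1 ++ [CSym.minus], by
    refine ⟨by simp [a.2.1], ?_⟩
    simp [List.count_append, a.2.2, List.count_singleton]⟩

/-- Append `⊕` to a string. -/
def appP {n j : ℕ} (a : Str n j) : Str (n+1) j :=
  ⟨a.1 ++ [CSym.plus], by
    refine ⟨by simp [a.2.1], ?_⟩
    simp [List.count_append, a.2.2, List.count_singleton]⟩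

/-- Append `⊙` to a string. -/
def appO {n j : ℕ} (a : Str n j) : Str (n+1) (j+1) :=
  ⟨a.1 ++ [CSym.mid], by
    refine ⟨by simp [a.2.1], ?_⟩
    simp [List.count_append, a.2.2, List.count_singleton]⟩

/-- A subset of `⟦n⟧_{j+1}` is well-formed if distinct elements share no even
face and no odd face. -/
def WfC {n j : ℕ} (ξ : Set (Str n (j+1))) : Prop :=
  ∀ a ∈ ξ, ∀ b ∈ ξ, a ≠ b → posF a ∩ posF b = ∅ ∧ negF a ∩ negF b = ∅

/-- `ξ` moves `μ` to `π`. -/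
def MovesC {n j : ℕ} (ξ : Set (Str n (j+1))) (μ π : Set (Str n j)) : Prop :=
  π = (μ ∪ sPos ξ) \ sNeg ξ ∧ μ = (π ∪ sNeg ξ) \ sPos ξ

/-!
Appending a symbol `η ≠ ⊙` to a cube does not change its faces except for appending `η` to each
of them. Appending `⊙` to `a ∈ x` keeps the faces of `a` (followed by `⊙`) and adds the one face
obtained from the new last `⊙`: as `a` has an even number `j + 1` of `⊙`'s, this is `a⊕` on the
positive side and `a⊖` on the negative side. Faces ending in different symbols are distinct, so
two cubes from different parts of `x̄⊖ ∪ x⊙ ∪ x̂⊕` can only share the extra face of some `a⊙`,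
namely `a⊖` as a negative face of some `b⊖` (`a ∈ b⁻` with `b ∈ x̄`) or `a⊕` as a positive face
of some `b⊕` (`a ∈ b⁺` with `b ∈ x̂`). The hypotheses exclude exactly these.
-/

def listFaces (f : ℕ → CSym) (l : List CSym) : Set (List CSym) :=
  {m | ∃ (q : ℕ) (h : q < l.length), l.get ⟨q, h⟩ = CSym.mid ∧
    m = l.set q (f ((l.take q).count CSym.mid))}

def posRule (k : ℕ) : CSym := if Even k then CSym.plus else CSym.minus

def negRule (k : ℕ) : CSym := if Even k then CSym.minus else CSym.plus

theorem mem_listFaces_concat {f : ℕ → CSym} {l m : List CSym} {s : CSym} :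
    m ∈ listFaces f (l ++ [s]) ↔
      (∃ m' ∈ listFaces f l, m = m' ++ [s]) ∨ (s = CSym.mid ∧ m = l ++ [f (l.count CSym.mid)]) := by
  constructor
  · rintro ⟨q, hq, hmid, rfl⟩
    simp only [List.get_eq_getElem, List.length_append, List.length_singleton] at hq hmid
    rcases Nat.lt_or_ge q l.length with hql | hql
    · rw [List.getElem_append_left hql] at hmid
      refine Or.inl ⟨_, ⟨q, hql, hmid, rfl⟩, ?_⟩
      rw [List.set_append_left _ _ hql, List.take_append_of_le_length hql.le]
    · obtain rfl : q = l.length := by omega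
      rw [List.getElem_concat_length rfl] at hmid
      refine Or.inr ⟨hmid, ?_⟩
      simp
  · rintro (⟨m', ⟨q, hq, hmid, rfl⟩, rfl⟩ | ⟨rfl, rfl⟩)
    · refine ⟨q, by simp; omega, ?_, ?_⟩
      · simpa [List.getElem_append_left hq] using hmid
      · rw [List.set_append_left _ _ hq, List.take_append_of_le_length hq.le]
    · exact ⟨l.length, by simp, by simp, by simp⟩

@[simp] theorem val_appM {n j : ℕ} (a : Str n j) : (appM a).1 = a.1 ++ [CSym.minus] := rfl
@[simp] theorem val_appP {n j : ℕ} (a : Str n j) : (appP a).1 = a.1 ++ [CSym.plus] := rfl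
@[simp] theorem val_appO {n j : ℕ} (a : Str n j) : (appO a).1 = a.1 ++ [CSym.mid] := rfl

section Faces

variable {n j : ℕ}

theorem Str.ext_iff {a b : Str n j} : a = b ↔ a.1 = b.1 := Subtype.ext_iff

theorem posF_eq_setOf (a : Str n (j+1)) : posF a = {b | b.1 ∈ listFaces posRule a.1} := rfl

theorem negF_eq_setOf (a : Str n (j+1)) : negF a = {b | b.1 ∈ listFaces negRule a.1} := rfl

theorem setOf_mem_listFaces_concat_of_ne_mid {f : ℕ → CSym} {s : CSym} (hs : s ≠ CSym.mid)
    {g : Str n j → Str (n+1) j} (hg : ∀ b, (g b).1 = b.1 ++ [s])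
    {a : Str n (j+1)} {a' : Str (n+1) (j+1)} (ha' : a'.1 = a.1 ++ [s]) :
    {c : Str (n+1) j | c.1 ∈ listFaces f a'.1} = g '' {b | b.1 ∈ listFaces f a.1} := by
  ext c
  simp only [Set.mem_ofPred_eq, Set.mem_image, ha', mem_listFaces_concat, hs, false_and, or_false]
  constructor
  · rintro ⟨m, hm, hc⟩
    obtain ⟨hlen, hcount⟩ := c.2
    rw [hc] at hlen hcount
    have hs' : [s].count CSym.mid = 0 := List.count_eq_zero.mpr (by simp [Ne.symm hs])
    rw [List.count_append, hs'] at hcount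
    exact ⟨⟨m, by simpa using hlen, hcount⟩, hm, Subtype.ext ((hg _).trans hc.symm)⟩
  · rintro ⟨b, hb, rfl⟩
    exact ⟨b.1, hb, hg b⟩

theorem setOf_mem_listFaces_appO (f : ℕ → CSym) (a : Str n (j+1)) :
    {c : Str (n+1) (j+1) | c.1 ∈ listFaces f (appO a).1} =
      appO '' {b | b.1 ∈ listFaces f a.1} ∪ {c | c.1 = a.1 ++ [f (j+1)]} := by
  ext c
  simp only [Set.mem_ofPred_eq, Set.mem_union, Set.mem_image, val_appO, mem_listFaces_concat,
    true_and, a.2.2]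
  refine or_congr_left ⟨?_, ?_⟩
  · rintro ⟨m, hm, hc⟩
    obtain ⟨hlen, hcount⟩ := c.2
    rw [hc] at hlen hcount
    exact ⟨⟨m, by simpa using hlen, by simpa [List.count_append] using hcount⟩, hm,
      Subtype.ext hc.symm⟩
  · rintro ⟨b, hb, rfl⟩
    exact ⟨b.1, hb, rfl⟩

theorem posF_appM (a : Str n (j+1)) : posF (appM a) = appM '' posF a :=
  setOf_mem_listFaces_concat_of_ne_mid (f := posRule) (s := CSym.minus) (by decide) (fun _ => rfl)
    rfl

theorem negF_appM (a : Str n (j+1)) : negF (appM a) = appM '' negF a :=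
  setOf_mem_listFaces_concat_of_ne_mid (f := negRule) (s := CSym.minus) (by decide) (fun _ => rfl)
    rfl

theorem posF_appP (a : Str n (j+1)) : posF (appP a) = appP '' posF a :=
  setOf_mem_listFaces_concat_of_ne_mid (f := posRule) (s := CSym.plus) (by decide) (fun _ => rfl)
    rfl

theorem negF_appP (a : Str n (j+1)) : negF (appP a) = appP '' negF a :=
  setOf_mem_listFaces_concat_of_ne_mid (f := negRule) (s := CSym.plus) (by decide) (fun _ => rfl)
    rfl

theorem posF_appO (hj : Even (j+1)) (a : Str n (j+1)) :
    posF (appO a) = appO '' posF a ∪ {appP a} := by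
  rw [posF_eq_setOf, setOf_mem_listFaces_appO]
  congr 1
  ext c
  simp [posRule, hj, Str.ext_iff]

theorem negF_appO (hj : Even (j+1)) (a : Str n (j+1)) :
    negF (appO a) = appO '' negF a ∪ {appM a} := by
  rw [negF_eq_setOf, setOf_mem_listFaces_appO]
  congr 1
  ext c
  simp [negRule, hj, Str.ext_iff]

end Faces

section Append

variable {n j : ℕ}

theorem appM_injective : Function.Injective (appM (n := n) (j := j)) :=
  fun _ _ h => Subtype.ext (List.append_cancel_right (congrArg Subtype.val h))

theorem appP_injective : Function.Injective (appP (n := n) (j := j)) :=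
  fun _ _ h => Subtype.ext (List.append_cancel_right (congrArg Subtype.val h))

theorem appO_injective : Function.Injective (appO (n := n) (j := j)) :=
  fun _ _ h => Subtype.ext (List.append_cancel_right (congrArg Subtype.val h))

@[simp] theorem appM_ne_appP (a b : Str n j) : appM a ≠ appP b := by
  simp [Str.ext_iff]

@[simp] theorem appP_ne_appM (a b : Str n j) : appP a ≠ appM b :=
  (appM_ne_appP b a).symm

@[simp] theorem appO_ne_appM (a : Str n j) (b : Str n (j+1)) : appO a ≠ appM b := by
  simp [Str.ext_iff]

@[simp] theorem appO_ne_appP (a : Str n j) (b : Str n (j+1)) : appO a ≠ appP b := by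
  simp [Str.ext_iff]

theorem disjoint_image_appM_appP (s t : Set (Str n j)) : Disjoint (appM '' s) (appP '' t) :=
  Set.disjoint_image_image fun _ _ _ _ => appM_ne_appP _ _

theorem disjoint_image_appM_appO (s : Set (Str n (j+1))) (t : Set (Str n j)) :
    Disjoint (appM '' s) (appO '' t) :=
  Set.disjoint_image_image fun _ _ _ _ => (appO_ne_appM _ _).symm

theorem disjoint_image_appP_appO (s : Set (Str n (j+1))) (t : Set (Str n j)) :
    Disjoint (appP '' s) (appO '' t) :=
  Set.disjoint_image_image fun _ _ _ _ => (appO_ne_appP _ _).symm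

end Append

section FacesDisjoint

variable {n j : ℕ}

def FacesDisjoint (a b : Str n (j+1)) : Prop :=
  Disjoint (posF a) (posF b) ∧ Disjoint (negF a) (negF b)

instance : Std.Symm (FacesDisjoint (n := n) (j := j)) := ⟨fun _ _ h => ⟨h.1.symm, h.2.symm⟩⟩

theorem facesDisjoint_iff_inter_eq_empty {a b : Str n (j+1)} :
    FacesDisjoint a b ↔ posF a ∩ posF b = ∅ ∧ negF a ∩ negF b = ∅ := by
  simp only [FacesDisjoint, Set.disjoint_iff_inter_eq_empty]

theorem wfC_iff_pairwise {ξ : Set (Str n (j+1))} : WfC ξ ↔ ξ.Pairwise FacesDisjoint := by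
  simp only [WfC, Set.Pairwise, facesDisjoint_iff_inter_eq_empty]

theorem FacesDisjoint.appM {a b : Str n (j+1)} (h : FacesDisjoint a b) :
    FacesDisjoint (appM a) (appM b) := by
  simpa only [FacesDisjoint, posF_appM, negF_appM, Set.disjoint_image_iff appM_injective] using h

theorem FacesDisjoint.appP {a b : Str n (j+1)} (h : FacesDisjoint a b) :
    FacesDisjoint (appP a) (appP b) := by
  simpa only [FacesDisjoint, posF_appP, negF_appP, Set.disjoint_image_iff appP_injective] using h

theorem FacesDisjoint.appO (hj : Even (j+1)) {a b : Str n (j+1)} (hab : a ≠ b)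
    (h : FacesDisjoint a b) : FacesDisjoint (appO a) (appO b) := by
  simp [FacesDisjoint, posF_appO hj, negF_appO hj, Set.disjoint_image_iff appO_injective, h.1, h.2,
    appP_injective.eq_iff, appM_injective.eq_iff, hab.symm]

theorem facesDisjoint_appM_appP (a b : Str n (j+1)) : FacesDisjoint (appM a) (appP b) := by
  simp [FacesDisjoint, posF_appM, posF_appP, negF_appM, negF_appP, disjoint_image_appM_appP]

theorem facesDisjoint_appM_appO (hj : Even (j+1)) {a : Str n (j+2)} {c : Str n (j+1)}
    (hc : c ∉ negF a) : FacesDisjoint (appM a) (appO c) := by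
  simp [FacesDisjoint, posF_appM, negF_appM, posF_appO hj, negF_appO hj, disjoint_image_appM_appO,
    appM_injective.eq_iff, hc]

theorem facesDisjoint_appP_appO (hj : Even (j+1)) {a : Str n (j+2)} {c : Str n (j+1)}
    (hc : c ∉ posF a) : FacesDisjoint (appP a) (appO c) := by
  simp [FacesDisjoint, posF_appP, negF_appP, posF_appO hj, negF_appO hj, disjoint_image_appP_appO,
    appP_injective.eq_iff, hc]

end FacesDisjoint

/-- If `x`, `x̄`, `x̂` are well-formed with `x̄⁻ ∩ x = ∅` and `x̂⁺ ∩ x = ∅`,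
then `x̄⊖ ∪ x⊙ ∪ x̂⊕` is well-formed; moreover elements of `x̄⊖` and `x̂⊕`
share no face at all. -/
theorem cube_union_wf_of_wf (n j : ℕ) (hj : Odd j)
    (x : Set (Str n (j+1))) (xb xh : Set (Str n (j+2)))
    (hx : WfC x) (hxb : WfC xb) (hxh : WfC xh)
    (hb : sNeg xb ∩ x = ∅) (hh : sPos xh ∩ x = ∅) :
    WfC (appM '' xb ∪ appO '' x ∪ appP '' xh) ∧
    (∀ a ∈ appM '' xb, ∀ b ∈ appP '' xh,
      posF a ∩ posF b = ∅ ∧ negF a ∩ negF b = ∅) := by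
  have hje : Even (j+1) := hj.add_one
  have hbx : ∀ a ∈ xb, ∀ c ∈ x, c ∉ negF a := fun a ha c hc h =>
    Set.eq_empty_iff_forall_notMem.mp hb c ⟨Set.mem_biUnion ha h, hc⟩
  have hhx : ∀ a ∈ xh, ∀ c ∈ x, c ∉ posF a := fun a ha c hc h =>
    Set.eq_empty_iff_forall_notMem.mp hh c ⟨Set.mem_biUnion ha h, hc⟩
  have hMP : ∀ a ∈ appM '' xb, ∀ b ∈ appP '' xh, FacesDisjoint a b := by
    rintro _ ⟨a, -, rfl⟩ _ ⟨b, -, rfl⟩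
    exact facesDisjoint_appM_appP a b
  refine ⟨?_, fun a ha b hb => facesDisjoint_iff_inter_eq_empty.mp (hMP a ha b hb)⟩
  rw [wfC_iff_pairwise] at hx hxb hxh ⊢
  rw [Set.pairwise_union_of_symm, Set.pairwise_union_of_symm]
  refine ⟨⟨(hxb.mono' fun _ _ => FacesDisjoint.appM).image,
    Set.Pairwise.image fun a ha c hc hac => (hx ha hc hac).appO hje hac, ?_⟩,
    (hxh.mono' fun _ _ => FacesDisjoint.appP).image, ?_⟩
  · rintro _ ⟨a, ha, rfl⟩ _ ⟨c, hc, rfl⟩ -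
    exact facesDisjoint_appM_appO hje (hbx a ha c hc)
  · rintro _ (hM | ⟨c, hc, rfl⟩) _ hP -
    · exact hMP _ hM _ hP
    · obtain ⟨b, hb, rfl⟩ := hP
      exact Std.Symm.symm _ _ (facesDisjoint_appP_appO hje (hhx b hb c hc))
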